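/- Let 0 < α < 1, ρ = v^{α,1−α}, u = v^{γ,δ} with γ,δ ≥ 0, and let h : [−1,1]² → ℝ be measurable such that sup_{|y|<1} (uφ)(y) ∫_{−1}^1 |h(x,y)| u(x)^{−1} dx < ∞ and, for some s > 0 and C₀ > 0, A(τ) ≤ C₀ τ^s for all τ ∈ (0, 1/2], where A(τ) := sup_{y∈I_τ} (uφ)(y) ∫_{−1}^1 |h(x, y+τφ(y)/2) − h(x, y−τφ(y)/2)| u(x)^{−1} dx and I_τ := [−1+4τ², 1−4τ²]. Define (Hf)(y) := (1/π)∫_{−1}^1 h(x,y) f(x) ρ(x) dx. Then for every r with 1 < r ≤ s+1 there exists a constant C, independent of f, such that ‖Hf‖_{Z_{r−1}(uφ)} ≤ C·‖f uρ‖_∞ for every f with ‖f uρ‖_∞ < ∞; that is, H is a continuous operator from C_{uρ} into Z_{r−1}(uφ). -/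

import Mathlib

/-
The hypotheses on `h` say that `‖f u ρ‖ = M` bounds `(Hf)·uφ` by `M B / π`, and bounds the weighted
symmetric first differences `(uφ)(c) |Hf(c + τφ(c)/2) - Hf(c - τφ(c)/2)|` by `M C₀ τ^s / π`.
The `k`-th difference `Δ^k_{τφ}` is a forward difference of order `k - 1` of first differences, i.e.
a combination with coefficients `binom(k-1, j)` of symmetric first differences centred at the nodes
`c = x + τφ(x) d / 2`, `|d| ≤ k - 1`, with step `τ' = τφ(x)/φ(c)`. For `x ∈ I_{kτ}` the node stays
comparable to `x` (`1 ∓ c ≥ (16/25)(1 ∓ x)`), so `τ' ≤ 25τ/16`, `c ∈ I_{τ'}` and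
`(uφ)(x) ≤ (25/16)^{γ+δ+1} (uφ)(c)`. Since `I_{kτ}` is empty unless `τ ≤ 1/2`, this gives
`Ω^k_φ(Hf, t)_{uφ} ≲ M min(t, 1)^s ≤ M t^{r-1}`.
-/

open Set Filter MeasureTheory intervalIntegral Polynomial
open scoped ENNReal

noncomputable section

/-- Jacobi weight `v^{a,b}(x) = (1-x)^a (1+x)^b`. -/
def jw (a b : ℝ) : ℝ → ℝ := fun x => (1 - x) ^ a * (1 + x) ^ b

/-- `φ(x) = √(1-x²)`. -/
def phiw : ℝ → ℝ := fun x => Real.sqrt (1 - x ^ 2)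

/-- Weighted sup ("uniform") norm `‖g w‖_∞` over `(-1,1)`, valued in `ℝ≥0∞`. -/
def wnorm (w g : ℝ → ℝ) : ℝ≥0∞ := ⨆ x ∈ Ioo (-1 : ℝ) 1, ENNReal.ofReal |g x * w x|

/-- Membership in the space `C_w`: continuity on `(-1,1)` together with the
endpoint conditions (`(gw)(x) → 0` at an endpoint where `w` vanishes, continuous
extendability at an endpoint where `w` does not vanish). -/
def memC (w g : ℝ → ℝ) : Prop :=
  ContinuousOn g (Ioo (-1 : ℝ) 1) ∧
  (w 1 = 0 → Tendsto (fun x => g x * w x) (nhdsWithin 1 (Iio (1 : ℝ))) (nhds 0)) ∧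
  (w 1 ≠ 0 → ∃ L, Tendsto g (nhdsWithin 1 (Iio (1 : ℝ))) (nhds L)) ∧
  (w (-1) = 0 → Tendsto (fun x => g x * w x) (nhdsWithin (-1) (Ioi (-1 : ℝ))) (nhds 0)) ∧
  (w (-1) ≠ 0 → ∃ L, Tendsto g (nhdsWithin (-1) (Ioi (-1 : ℝ))) (nhds L))

/-- The symmetric difference `Δ^k_{τφ} g(x)`. -/
def Dk (k : ℕ) (τ : ℝ) (g : ℝ → ℝ) (x : ℝ) : ℝ :=
  ∑ i ∈ Finset.range (k + 1),
    (-1 : ℝ) ^ i * (k.choose i : ℝ) * g (x + τ * phiw x / 2 * ((k : ℝ) - 2 * i))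

/-- Main part of the φ-modulus of smoothness `Ω^k_φ(g,t)_w`. -/
def Om (k : ℕ) (w g : ℝ → ℝ) (t : ℝ) : ℝ≥0∞ :=
  ⨆ (τ : ℝ) (_ : τ ∈ Ioc (0 : ℝ) t),
    ⨆ (x : ℝ) (_ : x ∈ Icc (-1 + (2 * (k : ℝ) * τ) ^ 2) (1 - (2 * (k : ℝ) * τ) ^ 2)),
      ENNReal.ofReal (w x * |Dk k τ g x|)

/-- Zygmund seminorm of order `r` built with the `k`-th modulus:
`sup_{t>0} Ω^k_φ(g,t)_w / t^r`. -/
def ZS (r : ℝ) (k : ℕ) (w g : ℝ → ℝ) : ℝ≥0∞ :=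
  ⨆ (t : ℝ) (_ : 0 < t), Om k w g t / ENNReal.ofReal (t ^ r)

/-- Zygmund norm `‖g‖_{Z_r(w)}` (with `k = ⌊r⌋ + 1`). -/
def Zn (r : ℝ) (w g : ℝ → ℝ) : ℝ≥0∞ := wnorm w g + ZS r (⌊r⌋ + 1).toNat w g

/-- Membership in the Zygmund space `Z_r(w)`. -/
def memZ (r : ℝ) (w g : ℝ → ℝ) : Prop := memC w g ∧ Zn r w g < ⊤

/-- Weighted error of best polynomial approximation `E_m(g)_w`. -/
def Eerr (m : ℕ) (w g : ℝ → ℝ) : ℝ≥0∞ :=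
  ⨅ (P : Polynomial ℝ) (_ : P.natDegree ≤ m), wnorm w (fun x => g x - P.eval x)

/-- Unweighted error of best uniform polynomial approximation on `[-1,1]`. -/
def EerrI (m : ℕ) (g : ℝ → ℝ) : ℝ≥0∞ :=
  ⨅ (P : Polynomial ℝ) (_ : P.natDegree ≤ m),
    ⨆ x ∈ Icc (-1 : ℝ) 1, ENNReal.ofReal |g x - P.eval x|

lemma jw_pos {a b x : ℝ} (hx : x ∈ Ioo (-1 : ℝ) 1) : 0 < jw a b x :=
  mul_pos (Real.rpow_pos_of_pos (by linarith [hx.2]) _)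
    (Real.rpow_pos_of_pos (by linarith [hx.1]) _)

lemma jw_nonneg {a b x : ℝ} (hx : x ∈ Icc (-1 : ℝ) 1) : 0 ≤ jw a b x :=
  mul_nonneg (Real.rpow_nonneg (by linarith [hx.2]) _) (Real.rpow_nonneg (by linarith [hx.1]) _)

lemma phiw_pos {x : ℝ} (hx : x ∈ Ioo (-1 : ℝ) 1) : 0 < phiw x :=
  Real.sqrt_pos.2 (by nlinarith [hx.1, hx.2])

lemma phiw_sq {x : ℝ} (hx : x ∈ Icc (-1 : ℝ) 1) : phiw x ^ 2 = (1 - x) * (1 + x) := by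
  rw [phiw, Real.sq_sqrt (by nlinarith [hx.1, hx.2])]
  ring

lemma mem_Ioo_of_mem_Icc_sq {x e : ℝ} (he : e ≠ 0) (hx : x ∈ Icc (-1 + e ^ 2) (1 - e ^ 2)) :
    x ∈ Ioo (-1 : ℝ) 1 :=
  ⟨by nlinarith [hx.1, pow_pos (abs_pos.mpr he) 2, sq_abs e],
    by nlinarith [hx.2, pow_pos (abs_pos.mpr he) 2, sq_abs e]⟩

section Comparison

variable {q x c : ℝ} (hq : 0 ≤ q) (hx : x ∈ Icc (-1 : ℝ) 1)
  (h₁ : q * (1 - x) ≤ 1 - c) (h₂ : q * (1 + x) ≤ 1 + c)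
include hq hx h₁ h₂

lemma rpow_mul_jw_le_jw {a b : ℝ} (ha : 0 ≤ a) (hb : 0 ≤ b) :
    q ^ (a + b) * jw a b x ≤ jw a b c := by
  have hx₁ : 0 ≤ 1 - x := by linarith [hx.2]
  have hx₂ : 0 ≤ 1 + x := by linarith [hx.1]
  calc q ^ (a + b) * jw a b x = (q * (1 - x)) ^ a * (q * (1 + x)) ^ b := by
        rw [jw, Real.rpow_add_of_nonneg hq ha hb, Real.mul_rpow hq hx₁, Real.mul_rpow hq hx₂]
        ring
    _ ≤ (1 - c) ^ a * (1 + c) ^ b :=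
        mul_le_mul (Real.rpow_le_rpow (by positivity) h₁ ha)
          (Real.rpow_le_rpow (by positivity) h₂ hb) (by positivity)
          (Real.rpow_nonneg ((mul_nonneg hq hx₁).trans h₁) _)

lemma mul_phiw_le_phiw : q * phiw x ≤ phiw c := by
  have hx₁ : 0 ≤ 1 - x := by linarith [hx.2]
  have hx₂ : 0 ≤ 1 + x := by linarith [hx.1]
  rw [phiw, phiw, ← Real.sqrt_sq hq, ← Real.sqrt_mul (sq_nonneg q)]
  refine Real.sqrt_le_sqrt ?_
  calc q ^ 2 * (1 - x ^ 2) = (q * (1 - x)) * (q * (1 + x)) := by ring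
    _ ≤ (1 - c) * (1 + c) :=
        mul_le_mul h₁ h₂ (by positivity) ((mul_nonneg hq hx₁).trans h₁)
    _ = 1 - c ^ 2 := by ring

lemma rpow_mul_jw_mul_phiw_le {a b : ℝ} (ha : 0 ≤ a) (hb : 0 ≤ b) :
    q ^ (a + b + 1) * (jw a b x * phiw x) ≤ jw a b c * phiw c := by
  rw [Real.rpow_add_of_nonneg hq (add_nonneg ha hb) zero_le_one, Real.rpow_one]
  calc q ^ (a + b) * q * (jw a b x * phiw x) = (q ^ (a + b) * jw a b x) * (q * phiw x) := by ring
    _ ≤ jw a b c * phiw c :=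
        mul_le_mul (rpow_mul_jw_le_jw hq hx h₁ h₂ ha hb) (mul_phiw_le_phiw hq hx h₁ h₂)
          (mul_nonneg hq (Real.sqrt_nonneg _))
          ((mul_nonneg (Real.rpow_nonneg hq _) (jw_nonneg hx)).trans
            (rpow_mul_jw_le_jw hq hx h₁ h₂ ha hb))

end Comparison

lemma abs_le_of_sixteen_mul_sq_le {a b e : ℝ} (ha : 0 ≤ a) (hb : b ≤ 2)
    (he : 16 * e ^ 2 ≤ a ^ 2 * b) : |e| ≤ 9 / 25 * a :=
  abs_le_of_sq_le_sq (by nlinarith [mul_le_mul_of_nonneg_left hb (sq_nonneg a)]) (by positivity)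

lemma le_one_sub_add_shift {x τ d : ℝ} (hx : x ∈ Icc (-1 : ℝ) 1)
    (h₁ : 4 * (τ * d) ^ 2 ≤ 1 - x) (h₂ : 4 * (τ * d) ^ 2 ≤ 1 + x) :
    16 / 25 * (1 - x) ≤ 1 - (x + τ * phiw x / 2 * d) ∧
      16 / 25 * (1 + x) ≤ 1 + (x + τ * phiw x / 2 * d) := by
  have hx₁ : 0 ≤ 1 - x := by linarith [hx.2]
  have hx₂ : 0 ≤ 1 + x := by linarith [hx.1]
  have he : 16 * (τ * phiw x / 2 * d) ^ 2 = 4 * (τ * d) ^ 2 * ((1 - x) * (1 + x)) := by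
    rw [← phiw_sq hx]; ring
  have hr := abs_le_of_sixteen_mul_sq_le (b := 1 + x) hx₁ (by linarith [hx.1]) (he.trans_le (by
    nlinarith [mul_le_mul_of_nonneg_right h₁ (mul_nonneg hx₁ hx₂)]))
  have hl := abs_le_of_sixteen_mul_sq_le (b := 1 - x) hx₂ (by linarith [hx.2]) (he.trans_le (by
    nlinarith [mul_le_mul_of_nonneg_right h₂ (mul_nonneg hx₁ hx₂)]))
  constructor <;> linarith [abs_le.mp hr, abs_le.mp hl]

lemma le_half_of_mem_Icc {τ c : ℝ} (hc : c ∈ Icc (-1 + 4 * τ ^ 2) (1 - 4 * τ ^ 2)) :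
    τ ≤ 1 / 2 := by
  nlinarith [hc.1, hc.2]

lemma le_one_sub_add_shift_of_mem_Icc {k : ℕ} {τ x d : ℝ}
    (hx : x ∈ Icc (-1 + (2 * k * τ) ^ 2) (1 - (2 * k * τ) ^ 2)) (hd : |d| ≤ k - 1) :
    16 / 25 * (1 - x) ≤ 1 - (x + τ * phiw x / 2 * d) ∧
      16 / 25 * (1 + x) ≤ 1 + (x + τ * phiw x / 2 * d) := by
  have hτd : (τ * d) ^ 2 ≤ (k * τ) ^ 2 := by
    refine sq_le_sq.mpr ?_
    rw [abs_mul, abs_mul, mul_comm |τ|, Nat.abs_cast]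
    exact mul_le_mul_of_nonneg_right (by linarith) (abs_nonneg τ)
  exact le_one_sub_add_shift ⟨by nlinarith [hx.1, hx.2], by nlinarith [hx.1, hx.2]⟩
    (by nlinarith [hx.2]) (by nlinarith [hx.1])

lemma exists_step_of_mem_Icc {k : ℕ} {τ x d : ℝ} (hτ : 0 < τ)
    (hx : x ∈ Icc (-1 + (2 * k * τ) ^ 2) (1 - (2 * k * τ) ^ 2)) (hd : |d| ≤ k - 1) :
    ∃ τ' ∈ Ioc (0 : ℝ) (1 / 2), τ' ≤ 25 / 16 * τ ∧
      x + τ * phiw x / 2 * d ∈ Icc (-1 + 4 * τ' ^ 2) (1 - 4 * τ' ^ 2) ∧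
      τ' * phiw (x + τ * phiw x / 2 * d) = τ * phiw x := by
  have hk : (1 : ℝ) ≤ k := by linarith [abs_nonneg d]
  have hkτ : (2 * τ) ^ 2 ≤ (2 * k * τ) ^ 2 := by gcongr; linarith
  have hx' := mem_Ioo_of_mem_Icc_sq (by positivity) hx
  rcases eq_or_ne d 0 with rfl | hd₀
  · simp only [mul_zero, add_zero]
    have hmem : x ∈ Icc (-1 + 4 * τ ^ 2) (1 - 4 * τ ^ 2) :=
      ⟨by nlinarith [hx.1], by nlinarith [hx.2]⟩
    exact ⟨τ, ⟨hτ, le_half_of_mem_Icc hmem⟩, by linarith, hmem, rfl⟩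
  -- `d ≠ 0` forces `k ≥ 2`, which leaves room for the factor `(25/16)²` in `4 τ'²`.
  have hk₂ : (2 : ℝ) ≤ k := by
    have : 1 < k := by exact_mod_cast (by linarith [abs_pos.mpr hd₀] : (1 : ℝ) < k)
    exact_mod_cast this
  obtain ⟨hc₁, hc₂⟩ := le_one_sub_add_shift_of_mem_Icc hx hd
  set c := x + τ * phiw x / 2 * d
  have hφx := phiw_pos hx'
  have hφc : 16 / 25 * phiw x ≤ phiw c :=
    mul_phiw_le_phiw (by norm_num) (Ioo_subset_Icc_self hx') hc₁ hc₂
  have hφc₀ : 0 < phiw c := by linarith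
  have hτ' : τ * phiw x / phiw c ≤ 25 / 16 * τ := by
    rw [div_le_iff₀ hφc₀]; nlinarith
  have hτ'₀ : 0 < τ * phiw x / phiw c := by positivity
  have hsq : 4 * (τ * phiw x / phiw c) ^ 2 ≤ 16 / 25 * (2 * k * τ) ^ 2 := by
    have hk4 : (4 : ℝ) ≤ k ^ 2 := by nlinarith
    calc 4 * (τ * phiw x / phiw c) ^ 2 ≤ 4 * (25 / 16 * τ) ^ 2 := by gcongr
      _ ≤ 16 / 25 * (2 * k * τ) ^ 2 := by nlinarith [sq_nonneg τ]
  have hmem : c ∈ Icc (-1 + 4 * (τ * phiw x / phiw c) ^ 2) (1 - 4 * (τ * phiw x / phiw c) ^ 2) :=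
    ⟨by nlinarith [hx.1], by nlinarith [hx.2]⟩
  exact ⟨_, ⟨hτ'₀, le_half_of_mem_Icc hmem⟩, hτ', hmem, div_mul_cancel₀ _ hφc₀.ne'⟩

open scoped fwdDiff

lemma Dk_eq_fwdDiff_iter (k : ℕ) (τ : ℝ) (g : ℝ → ℝ) (x : ℝ) :
    Dk k τ g x = (Δ_[τ * phiw x])^[k] g (x - k * (τ * phiw x / 2)) := by
  rw [fwdDiff_iter_eq_sum_shift, Dk, ← Finset.sum_range_reflect]
  refine Finset.sum_congr rfl fun i hi => ?_
  have hi : i ≤ k := Nat.lt_succ_iff.mp (Finset.mem_range.mp hi)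
  rw [Nat.add_sub_cancel, Nat.choose_symm hi, Nat.cast_sub hi, zsmul_eq_mul, nsmul_eq_mul]
  push_cast
  ring_nf

lemma mul_abs_fwdDiff_iter_le {f : ℝ → ℝ} {w K h y : ℝ} (m : ℕ) (hw : 0 ≤ w)
    (hf : ∀ j ≤ m, w * |Δ_[h] f (y + j * h)| ≤ K) :
    w * |(Δ_[h])^[m + 1] f y| ≤ 2 ^ m * K := by
  rw [Function.iterate_succ_apply, fwdDiff_iter_eq_sum_shift, ← abs_of_nonneg hw, ← abs_mul,
    Finset.mul_sum]
  calc |∑ j ∈ Finset.range (m + 1), w * (((-1 : ℤ) ^ (m - j) * m.choose j) • Δ_[h] f (y + j • h))|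
      ≤ ∑ j ∈ Finset.range (m + 1), (m.choose j : ℝ) * (w * |Δ_[h] f (y + j * h)|) := by
        refine (Finset.abs_sum_le_sum_abs _ _).trans (le_of_eq (Finset.sum_congr rfl fun j _ => ?_))
        rw [zsmul_eq_mul, nsmul_eq_mul]
        simp only [Int.cast_mul, Int.cast_pow, Int.cast_neg, Int.cast_one, Int.cast_natCast,
          abs_mul, abs_of_nonneg hw, abs_pow, abs_neg, abs_one, one_pow, Nat.abs_cast, one_mul]
        ring
    _ ≤ ∑ j ∈ Finset.range (m + 1), (m.choose j : ℝ) * K :=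
        Finset.sum_le_sum fun j hj =>
          mul_le_mul_of_nonneg_left (hf j (Nat.lt_succ_iff.mp (Finset.mem_range.mp hj)))
            (by positivity)
    _ = 2 ^ m * K := by
        rw [← Finset.sum_mul, ← Nat.cast_sum, Nat.sum_range_choose, Nat.cast_pow, Nat.cast_ofNat]

section Zygmund

variable {a b s K : ℝ} {g : ℝ → ℝ} (ha : 0 ≤ a) (hb : 0 ≤ b) (hs : 0 ≤ s) (hK : 0 ≤ K)
  (hg : ∀ τ ∈ Ioc (0 : ℝ) (1 / 2), ∀ c ∈ Icc (-1 + 4 * τ ^ 2) (1 - 4 * τ ^ 2),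
    jw a b c * phiw c * |g (c + τ * phiw c / 2) - g (c - τ * phiw c / 2)| ≤ K * τ ^ s)
include ha hb hs hK hg

lemma rpow_mul_jw_mul_phiw_mul_abs_sub_le {k : ℕ} {τ x d : ℝ} (hτ : 0 < τ)
    (hx : x ∈ Icc (-1 + (2 * k * τ) ^ 2) (1 - (2 * k * τ) ^ 2)) (hd : |d| ≤ k - 1) :
    (16 / 25) ^ (a + b + 1 + s) *
        (jw a b x * phiw x * |g (x + τ * phiw x / 2 * (d + 1)) - g (x + τ * phiw x / 2 * (d - 1))|)
      ≤ K * τ ^ s := by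
  obtain ⟨τ', hτ', hτ'τ, hmem, hstep⟩ := exists_step_of_mem_Icc hτ hx hd
  obtain ⟨hc₁, hc₂⟩ := le_one_sub_add_shift_of_mem_Icc hx hd
  set c := x + τ * phiw x / 2 * d
  have hW := rpow_mul_jw_mul_phiw_le (by norm_num)
    ⟨by nlinarith [hx.1, hx.2], by nlinarith [hx.1, hx.2]⟩ hc₁ hc₂ ha hb
  have hdiff := hg τ' hτ' c hmem
  rw [show τ' * phiw c / 2 = τ * phiw x / 2 by rw [hstep],
    show c + τ * phiw x / 2 = x + τ * phiw x / 2 * (d + 1) by ring,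
    show c - τ * phiw x / 2 = x + τ * phiw x / 2 * (d - 1) by ring] at hdiff
  set Δ := |g (x + τ * phiw x / 2 * (d + 1)) - g (x + τ * phiw x / 2 * (d - 1))|
  calc (16 / 25) ^ (a + b + 1 + s) * (jw a b x * phiw x * Δ)
      = (16 / 25) ^ s * ((16 / 25) ^ (a + b + 1) * (jw a b x * phiw x) * Δ) := by
        rw [Real.rpow_add (by norm_num)]; ring
    _ ≤ (16 / 25) ^ s * (jw a b c * phiw c * Δ) := by gcongr
    _ ≤ (16 / 25) ^ s * (K * τ' ^ s) := by gcongr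
    _ ≤ (16 / 25) ^ s * (K * (25 / 16 * τ) ^ s) := by gcongr; exact hτ'.1.le
    _ = K * τ ^ s := by
        rw [mul_left_comm, ← Real.mul_rpow (by norm_num) (by positivity)]; ring_nf

lemma rpow_mul_jw_mul_phiw_mul_abs_Dk_le (m : ℕ) {τ x : ℝ} (hτ : 0 < τ)
    (hx : x ∈ Icc (-1 + (2 * ↑(m + 1) * τ) ^ 2) (1 - (2 * ↑(m + 1) * τ) ^ 2)) :
    (16 / 25) ^ (a + b + 1 + s) * (jw a b x * phiw x) * |Dk (m + 1) τ g x| ≤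
      2 ^ m * (K * τ ^ s) := by
  have hx' := mem_Ioo_of_mem_Icc_sq (by positivity) hx
  rw [Dk_eq_fwdDiff_iter]
  have hw : 0 ≤ jw a b x * phiw x := (mul_pos (jw_pos hx') (phiw_pos hx')).le
  refine mul_abs_fwdDiff_iter_le m (by positivity) fun j hj => ?_
  have hd : |(2 * j - m : ℝ)| ≤ ↑(m + 1) - 1 := by
    have : (j : ℝ) ≤ m := by exact_mod_cast hj
    push_cast
    exact abs_le.mpr ⟨by linarith [(j.cast_nonneg : (0 : ℝ) ≤ j)], by linarith⟩
  convert ← rpow_mul_jw_mul_phiw_mul_abs_sub_le ha hb hs hK hg hτ hx hd using 1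
  rw [fwdDiff]
  push_cast
  ring_nf

lemma ZS_jw_mul_phiw_le {ρ : ℝ} (hρ : 0 ≤ ρ) (hρs : ρ ≤ s) {k : ℕ} (hk : 1 ≤ k) :
    ZS ρ k (fun x => jw a b x * phiw x) g ≤
      ENNReal.ofReal (2 ^ (k - 1) * K / (16 / 25) ^ (a + b + 1 + s)) := by
  obtain ⟨m, rfl⟩ : ∃ m, k = m + 1 := ⟨k - 1, by omega⟩
  have hq : (0 : ℝ) < (16 / 25) ^ (a + b + 1 + s) := by positivity
  refine iSup₂_le fun t ht => ENNReal.div_le_of_le_mul ?_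
  rw [← ENNReal.ofReal_mul (by positivity)]
  refine iSup₂_le fun τ hτ => iSup₂_le fun x hx => ENNReal.ofReal_le_ofReal ?_
  have hτ₁ : τ ≤ 1 := by
    have : 2 * τ ≤ 2 * ↑(m + 1) * τ := by push_cast; nlinarith [hτ.1, (m.cast_nonneg : (0 : ℝ) ≤ m)]
    nlinarith [hx.1, hx.2, hτ.1]
  have hDk := rpow_mul_jw_mul_phiw_mul_abs_Dk_le ha hb hs hK hg m hτ.1 hx
  calc jw a b x * phiw x * |Dk (m + 1) τ g x|
        ≤ 2 ^ m * K / (16 / 25) ^ (a + b + 1 + s) * τ ^ s := by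
        rw [div_mul_eq_mul_div, le_div_iff₀ hq]; linarith
    _ ≤ 2 ^ (m + 1 - 1) * K / (16 / 25) ^ (a + b + 1 + s) * t ^ ρ := by
        rw [Nat.add_sub_cancel]
        gcongr
        calc τ ^ s ≤ τ ^ ρ := Real.rpow_le_rpow_of_exponent_ge hτ.1 hτ₁ hρs
          _ ≤ t ^ ρ := Real.rpow_le_rpow hτ.1.le hτ.2 hρ

end Zygmund

section Integral

variable {a b M : ℝ} {u v F f : ℝ → ℝ} (hab : a ≤ b) (hF : Measurable F) (hf : Measurable f)
  (hv : Measurable v) (hu : ∀ x ∈ Ioo a b, 0 < u x) (hfM : ∀ x ∈ Ioo a b, |f x * (u x * v x)| ≤ M)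
  (hI : IntervalIntegrable (fun x => |F x| / u x) volume a b)
include hu hfM

lemma abs_mul_mul_le_of_mem_Ioo {x : ℝ} (hx : x ∈ Ioo a b) :
    |F x * f x * v x| ≤ M * (|F x| / u x) := by
  have hux := hu x hx
  calc |F x * f x * v x| = |F x| / u x * |f x * (u x * v x)| := by
        simp only [abs_mul, abs_of_pos hux]
        field_simp
    _ ≤ |F x| / u x * M := by gcongr; exact hfM x hx
    _ = M * (|F x| / u x) := mul_comm _ _

include hab hF hf hv hI

lemma intervalIntegrable_mul_mul : IntervalIntegrable (fun x => F x * f x * v x) volume a b := by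
  refine (hI.const_mul M).mono_fun ((hF.mul hf).mul hv).aestronglyMeasurable ?_
  rw [uIoc_of_le hab, ← Measure.restrict_congr_set Ioo_ae_eq_Ioc]
  refine ae_restrict_of_forall_mem measurableSet_Ioo fun x hx => ?_
  have h := abs_mul_mul_le_of_mem_Ioo hu hfM hx (F := F)
  simp only [Real.norm_eq_abs]
  exact h.trans (le_abs_self _)

lemma abs_integral_mul_mul_le :
    |∫ x in a..b, F x * f x * v x| ≤ M * ∫ x in a..b, |F x| / u x := by
  rw [← intervalIntegral.integral_const_mul]
  exact (intervalIntegral.abs_integral_le_integral_abs hab).trans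
    (intervalIntegral.integral_mono_on_of_le_Ioo hab
      (intervalIntegrable_mul_mul hab hF hf hv hu hfM hI).abs (hI.const_mul M)
      fun x hx => abs_mul_mul_le_of_mem_Ioo hu hfM hx)

end Integral

lemma abs_mul_le_toReal_wnorm {w g : ℝ → ℝ} (hg : wnorm w g ≠ ⊤) {x : ℝ} (hx : x ∈ Ioo (-1 : ℝ) 1) :
    |g x * w x| ≤ (wnorm w g).toReal :=
  (ENNReal.ofReal_le_iff_le_toReal hg).mp
    (le_iSup₂ (f := fun x (_ : x ∈ Ioo (-1 : ℝ) 1) => ENNReal.ofReal |g x * w x|) x hx)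

lemma wnorm_le_ofReal {w g : ℝ → ℝ} {C : ℝ} (h : ∀ x ∈ Ioo (-1 : ℝ) 1, |g x * w x| ≤ C) :
    wnorm w g ≤ ENNReal.ofReal C :=
  iSup₂_le fun x hx => ENNReal.ofReal_le_ofReal (h x hx)

lemma add_shift_mem_Ioo {τ c d : ℝ} (hτ : 0 < τ) (hd : |d| ≤ 1)
    (hc : c ∈ Icc (-1 + 4 * τ ^ 2) (1 - 4 * τ ^ 2)) : c + τ * phiw c / 2 * d ∈ Ioo (-1 : ℝ) 1 := by
  have hc' := mem_Ioo_of_mem_Icc_sq (x := c) (e := 2 * τ) (by positivity)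
    ⟨by linarith [hc.1], by linarith [hc.2]⟩
  have hτd : 4 * (τ * d) ^ 2 ≤ 4 * τ ^ 2 := by
    rw [mul_pow, ← sq_abs d]
    have : |d| ^ 2 ≤ 1 := by nlinarith [abs_nonneg d]
    nlinarith [sq_nonneg τ]
  obtain ⟨h₁, h₂⟩ := le_one_sub_add_shift (Ioo_subset_Icc_self hc') (d := d)
    (hτd.trans (by linarith [hc.2])) (hτd.trans (by linarith [hc.1]))
  constructor <;> nlinarith [hc'.1, hc'.2]

def kernelOp (h : ℝ → ℝ → ℝ) (v f : ℝ → ℝ) (y : ℝ) : ℝ :=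
  (1 / Real.pi) * ∫ x in (-1 : ℝ)..1, h x y * f x * v x

section KernelOp

variable {h : ℝ → ℝ → ℝ} {u v f : ℝ → ℝ} {M : ℝ} (hh : Measurable (Function.uncurry h))
  (hf : Measurable f) (hv : Measurable v) (hu : ∀ x ∈ Ioo (-1 : ℝ) 1, 0 < u x)
  (hfM : ∀ x ∈ Ioo (-1 : ℝ) 1, |f x * (u x * v x)| ≤ M)
include hh hf hv hu hfM

lemma abs_kernelOp_le {y : ℝ} (hI : IntervalIntegrable (fun x => |h x y| / u x) volume (-1) 1) :
    |kernelOp h v f y| ≤ M / Real.pi * ∫ x in (-1 : ℝ)..1, |h x y| / u x := by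
  have hhy : Measurable (h · y) := hh.comp (measurable_id.prodMk measurable_const)
  rw [kernelOp, abs_mul, abs_of_pos (by positivity), div_eq_mul_one_div M, mul_comm M, mul_assoc]
  gcongr
  exact abs_integral_mul_mul_le (by norm_num) hhy hf hv hu hfM hI

lemma abs_kernelOp_sub_le {y₁ y₂ : ℝ}
    (hI₁ : IntervalIntegrable (fun x => |h x y₁| / u x) volume (-1) 1)
    (hI₂ : IntervalIntegrable (fun x => |h x y₂| / u x) volume (-1) 1)
    (hI : IntervalIntegrable (fun x => |h x y₁ - h x y₂| / u x) volume (-1) 1) :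
    |kernelOp h v f y₁ - kernelOp h v f y₂| ≤
      M / Real.pi * ∫ x in (-1 : ℝ)..1, |h x y₁ - h x y₂| / u x := by
  have hhy (y : ℝ) : Measurable (h · y) := hh.comp (measurable_id.prodMk measurable_const)
  have hsub : kernelOp h v f y₁ - kernelOp h v f y₂ =
      (1 / Real.pi) * ∫ x in (-1 : ℝ)..1, (h x y₁ - h x y₂) * f x * v x := by
    rw [kernelOp, kernelOp, ← mul_sub, ← intervalIntegral.integral_sub
      (intervalIntegrable_mul_mul (by norm_num) (hhy y₁) hf hv hu hfM hI₁)
      (intervalIntegrable_mul_mul (by norm_num) (hhy y₂) hf hv hu hfM hI₂)]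
    simp only [sub_mul]
  rw [hsub, abs_mul, abs_of_pos (by positivity), div_eq_mul_one_div M, mul_comm M, mul_assoc]
  gcongr
  exact abs_integral_mul_mul_le (F := fun x => h x y₁ - h x y₂) (by norm_num)
    ((hhy y₁).sub (hhy y₂)) hf hv hu hfM hI

lemma wnorm_kernelOp_le {B : ℝ} (hB : ∀ y ∈ Ioo (-1 : ℝ) 1,
      IntervalIntegrable (fun x => |h x y| / u x) volume (-1) 1 ∧
      (u y * phiw y) * ∫ x in (-1 : ℝ)..1, |h x y| / u x ≤ B) :
    wnorm (fun y => u y * phiw y) (kernelOp h v f) ≤ ENNReal.ofReal (M / Real.pi * B) := by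
  have hM : 0 ≤ M := (abs_nonneg _).trans (hfM 0 (by norm_num))
  refine wnorm_le_ofReal fun y hy => ?_
  have hw : 0 ≤ u y * phiw y := mul_nonneg (hu y hy).le (Real.sqrt_nonneg _)
  calc |kernelOp h v f y * (u y * phiw y)|
      = |kernelOp h v f y| * (u y * phiw y) := by rw [abs_mul, abs_of_nonneg hw]
    _ ≤ M / Real.pi * (∫ x in (-1 : ℝ)..1, |h x y| / u x) * (u y * phiw y) := by
        gcongr; exact abs_kernelOp_le hh hf hv hu hfM (hB y hy).1
    _ = M / Real.pi * ((u y * phiw y) * ∫ x in (-1 : ℝ)..1, |h x y| / u x) := by ring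
    _ ≤ M / Real.pi * B := mul_le_mul_of_nonneg_left (hB y hy).2 (by positivity)

lemma mul_abs_kernelOp_sub_le {τ c C₀ s : ℝ} (hτ : 0 < τ)
    (hc : c ∈ Icc (-1 + 4 * τ ^ 2) (1 - 4 * τ ^ 2))
    (hI : ∀ y ∈ Ioo (-1 : ℝ) 1, IntervalIntegrable (fun x => |h x y| / u x) volume (-1) 1)
    (hA : IntervalIntegrable
          (fun x => |h x (c + τ * phiw c / 2) - h x (c - τ * phiw c / 2)| / u x) volume (-1) 1 ∧
      (u c * phiw c) * ∫ x in (-1 : ℝ)..1,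
          |h x (c + τ * phiw c / 2) - h x (c - τ * phiw c / 2)| / u x ≤ C₀ * τ ^ s) :
    u c * phiw c * |kernelOp h v f (c + τ * phiw c / 2) - kernelOp h v f (c - τ * phiw c / 2)| ≤
      M / Real.pi * C₀ * τ ^ s := by
  have hM : 0 ≤ M := (abs_nonneg _).trans (hfM 0 (by norm_num))
  have hc' : c ∈ Ioo (-1 : ℝ) 1 := by simpa using add_shift_mem_Ioo hτ (d := 0) (by simp) hc
  have hw : 0 ≤ u c * phiw c := mul_nonneg (hu c hc').le (Real.sqrt_nonneg _)
  have hy₁ : c + τ * phiw c / 2 ∈ Ioo (-1 : ℝ) 1 := by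
    simpa using add_shift_mem_Ioo hτ (d := 1) (by simp) hc
  have hy₂ : c - τ * phiw c / 2 ∈ Ioo (-1 : ℝ) 1 := by
    simpa [sub_eq_add_neg] using add_shift_mem_Ioo hτ (d := -1) (by simp) hc
  calc u c * phiw c * |kernelOp h v f (c + τ * phiw c / 2) - kernelOp h v f (c - τ * phiw c / 2)|
      ≤ u c * phiw c * (M / Real.pi * ∫ x in (-1 : ℝ)..1,
          |h x (c + τ * phiw c / 2) - h x (c - τ * phiw c / 2)| / u x) := by
        gcongr; exact abs_kernelOp_sub_le hh hf hv hu hfM (hI _ hy₁) (hI _ hy₂) hA.1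
    _ = M / Real.pi * ((u c * phiw c) * ∫ x in (-1 : ℝ)..1,
          |h x (c + τ * phiw c / 2) - h x (c - τ * phiw c / 2)| / u x) := by ring
    _ ≤ M / Real.pi * (C₀ * τ ^ s) := mul_le_mul_of_nonneg_left hA.2 (by positivity)
    _ = M / Real.pi * C₀ * τ ^ s := by ring

end KernelOp

lemma measurable_jw (a b : ℝ) : Measurable (jw a b) := by
  unfold jw; fun_prop

theorem statement12_general (α γ δ s C₀ B : ℝ)
    (hγ : 0 ≤ γ) (hδ : 0 ≤ δ) (hC₀ : 0 < C₀)
    (h : ℝ → ℝ → ℝ) (hmeas : Measurable (Function.uncurry h))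
    (hB : ∀ y ∈ Ioo (-1 : ℝ) 1,
      IntervalIntegrable (fun x => |h x y| / jw γ δ x) MeasureTheory.volume (-1) 1 ∧
      (jw γ δ y * phiw y) * ∫ x in (-1 : ℝ)..1, |h x y| / jw γ δ x ≤ B)
    (hA : ∀ τ ∈ Ioc (0 : ℝ) (1 / 2), ∀ y ∈ Icc (-1 + 4 * τ ^ 2) (1 - 4 * τ ^ 2),
      IntervalIntegrable
          (fun x => |h x (y + τ * phiw y / 2) - h x (y - τ * phiw y / 2)| / jw γ δ x)
          MeasureTheory.volume (-1) 1 ∧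
      (jw γ δ y * phiw y) *
          ∫ x in (-1 : ℝ)..1,
            |h x (y + τ * phiw y / 2) - h x (y - τ * phiw y / 2)| / jw γ δ x ≤
        C₀ * τ ^ s) :
    ∀ r : ℝ, 1 < r → r ≤ s + 1 →
      ∃ C : ℝ, 0 < C ∧ ∀ f : ℝ → ℝ, Measurable f →
        wnorm (fun x => jw γ δ x * jw α (1 - α) x) f < ⊤ →
        Zn (r - 1) (fun x => jw γ δ x * phiw x)
            (fun y => (1 / Real.pi) * ∫ x in (-1 : ℝ)..1, h x y * f x * jw α (1 - α) x) ≤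
          ENNReal.ofReal C * wnorm (fun x => jw γ δ x * jw α (1 - α) x) f := by
  intro r hr₁ hr₂
  have hB₀ : 0 ≤ B := (mul_nonneg (mul_nonneg (jw_pos (by norm_num)).le (Real.sqrt_nonneg _))
    (intervalIntegral.integral_nonneg (by norm_num) fun x hx => div_nonneg (abs_nonneg _)
      (jw_nonneg hx))).trans (hB 0 (by norm_num)).2
  set k := (⌊r - 1⌋ + 1).toNat
  have hk : 1 ≤ k := by have := Int.floor_nonneg.mpr (by linarith : (0 : ℝ) ≤ r - 1); omega
  set L := 2 ^ (k - 1) * (C₀ / Real.pi) / (16 / 25) ^ (γ + δ + 1 + s) with hL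
  refine ⟨B / Real.pi + L + 1, by positivity, fun f hf hfin => ?_⟩
  set M := (wnorm (fun x => jw γ δ x * jw α (1 - α) x) f).toReal
  have hM : 0 ≤ M := ENNReal.toReal_nonneg
  have hfM : ∀ x ∈ Ioo (-1 : ℝ) 1, |f x * (jw γ δ x * jw α (1 - α) x)| ≤ M :=
    fun x hx => abs_mul_le_toReal_wnorm hfin.ne hx
  have hu : ∀ x ∈ Ioo (-1 : ℝ) 1, 0 < jw γ δ x := fun x hx => jw_pos hx
  have hρ := measurable_jw α (1 - α)
  have hsup := wnorm_kernelOp_le hmeas hf hρ hu hfM hB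
  have hZS := ZS_jw_mul_phiw_le (s := s) (K := M / Real.pi * C₀) (ρ := r - 1) hγ hδ
    (by linarith) (by positivity)
    (fun τ hτ c hc => mul_abs_kernelOp_sub_le hmeas hf hρ hu hfM hτ.1 hc
      (fun y hy => (hB y hy).1) (hA τ hτ c hc))
    (by linarith) (by linarith) hk
  calc Zn (r - 1) (fun x => jw γ δ x * phiw x) (kernelOp h (jw α (1 - α)) f)
      ≤ ENNReal.ofReal (M / Real.pi * B) +
          ENNReal.ofReal (2 ^ (k - 1) * (M / Real.pi * C₀) / (16 / 25) ^ (γ + δ + 1 + s)) :=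
        add_le_add hsup hZS
    _ ≤ ENNReal.ofReal ((B / Real.pi + L + 1) * M) := by
        rw [← ENNReal.ofReal_add (by positivity) (by positivity)]
        refine ENNReal.ofReal_le_ofReal ?_
        calc _ = (B / Real.pi + L) * M := by rw [hL]; ring
          _ ≤ (B / Real.pi + L + 1) * M := by linarith
    _ = ENNReal.ofReal (B / Real.pi + L + 1) * wnorm (fun x => jw γ δ x * jw α (1 - α) x) f := by
        rw [ENNReal.ofReal_mul (by positivity), ENNReal.ofReal_toReal hfin.ne]

/-- Under the boundedness condition on `(uφ)(y)∫|h(x,y)|u(x)⁻¹dx`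
and the smoothness condition `A(τ) ≤ C₀ τ^s` for `τ ∈ (0,1/2]`, for every
`1 < r ≤ s+1` there is `C`, independent of `f`, with
`‖Hf‖_{Z_{r-1}(uφ)} ≤ C ‖f uρ‖_∞` for every `f` with finite `‖f uρ‖_∞`, i.e.
`H : C_{uρ} → Z_{r-1}(uφ)` is continuous. -/
theorem statement12 (α γ δ s C₀ B : ℝ) (hα0 : 0 < α) (hα1 : α < 1)
    (hγ : 0 ≤ γ) (hδ : 0 ≤ δ) (hs : 0 < s) (hC₀ : 0 < C₀)
    (h : ℝ → ℝ → ℝ) (hmeas : Measurable (Function.uncurry h))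
    (hB : ∀ y ∈ Ioo (-1 : ℝ) 1,
      IntervalIntegrable (fun x => |h x y| / jw γ δ x) MeasureTheory.volume (-1) 1 ∧
      (jw γ δ y * phiw y) * ∫ x in (-1 : ℝ)..1, |h x y| / jw γ δ x ≤ B)
    (hA : ∀ τ ∈ Ioc (0 : ℝ) (1 / 2), ∀ y ∈ Icc (-1 + 4 * τ ^ 2) (1 - 4 * τ ^ 2),
      IntervalIntegrable
          (fun x => |h x (y + τ * phiw y / 2) - h x (y - τ * phiw y / 2)| / jw γ δ x)
          MeasureTheory.volume (-1) 1 ∧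
      (jw γ δ y * phiw y) *
          ∫ x in (-1 : ℝ)..1,
            |h x (y + τ * phiw y / 2) - h x (y - τ * phiw y / 2)| / jw γ δ x ≤
        C₀ * τ ^ s) :
    ∀ r : ℝ, 1 < r → r ≤ s + 1 →
      ∃ C : ℝ, 0 < C ∧ ∀ f : ℝ → ℝ, Measurable f →
        wnorm (fun x => jw γ δ x * jw α (1 - α) x) f < ⊤ →
        Zn (r - 1) (fun x => jw γ δ x * phiw x)
            (fun y => (1 / Real.pi) * ∫ x in (-1 : ℝ)..1, h x y * f x * jw α (1 - α) x) ≤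
          ENNReal.ofReal C * wnorm (fun x => jw γ δ x * jw α (1 - α) x) f :=
  statement12_general α γ δ s C₀ B hγ hδ hC₀ h hmeas hB hA
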